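/- Let C be an essentially small triangulated category. Then there is a one-to-one correspondence between the dense triangulated subcategories of C and the subgroups H of the Grothendieck group K_0(C), sending a dense triangulated subcategory X to the subgroup generated by {[X] | X ∈ X}, with inverse sending a subgroup H to {A ∈ C | [A] ∈ H}. -/

import Mathlib

open CategoryTheory CategoryTheory.Limits Opposite ZeroObject

attribute [local instance] CategoryTheory.Limits.hasBinaryBiproducts_of_finite_biproducts

universe w v u

noncomputable section

/-- An object of a preadditive category with finite biproducts is *indecomposable* if it is
nonzero and admits no nontrivial direct sum decomposition. -/
def Indec {C : Type u} [Category.{v} C] [Preadditive C] [HasFiniteBiproducts C] (X : C) : Prop :=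
  ¬ IsZero X ∧ ∀ (Y Z : C), Nonempty (X ≅ Y ⊞ Z) → IsZero Y ∨ IsZero Z

/-- A preadditive category is *Krull-Schmidt* if every object is (isomorphic to) a finite
biproduct of objects having local endomorphism rings. -/
def IsKrullSchmidt (C : Type u) [Category.{v} C] [Preadditive C] [HasFiniteBiproducts C] : Prop :=
  ∀ X : C, ∃ (n : ℕ) (f : Fin n → C),
    (∀ i, IsLocalRing (CategoryTheory.End (f i))) ∧ Nonempty (X ≅ ⨁ f)

/-- `C` is *locally finite*: for every indecomposable `A` there are, up to isomorphism, only
finitely many indecomposables `B` with `Hom(A, B) ≠ 0`, and only finitely many indecomposables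
`B` with `Hom(B, A) ≠ 0`. -/
def LocFinite (C : Type u) [Category.{v} C] [Preadditive C] [HasFiniteBiproducts C] : Prop :=
  ∀ A : C, Indec A →
    (∃ (n : ℕ) (ind : Fin n → C), ∀ B : C, Indec B → (∃ φ : A ⟶ B, φ ≠ 0) →
        ∃ i, Nonempty (B ≅ ind i)) ∧
    (∃ (n : ℕ) (ind : Fin n → C), ∀ B : C, Indec B → (∃ φ : B ⟶ A, φ ≠ 0) →
        ∃ i, Nonempty (B ≅ ind i))

/-- `X` is a *dense* subcategory: `add X = C`, i.e. every object of `C` is a direct summand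
of an object of `X`. -/
def DenseSub {C : Type u} [Category.{v} C] [Preadditive C] [HasFiniteBiproducts C]
    (X : Set C) : Prop :=
  ∀ A : C, ∃ X₀ ∈ X, ∃ B : C, Nonempty (X₀ ≅ A ⊞ B)

/-- `X` is a full additive subcategory closed under isomorphisms (given as a set of objects). -/
def AddSub (C : Type u) [Category.{v} C] [Preadditive C] [HasFiniteBiproducts C]
    (X : Set C) : Prop :=
  (0 : C) ∈ X ∧ (∀ {A B : C}, A ∈ X → B ∈ X → (A ⊞ B) ∈ X) ∧
    (∀ {A B : C}, A ∈ X → Nonempty (A ≅ B) → B ∈ X)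

section K0ZeroDefs

variable (C : Type u) [Category.{v} C] [Preadditive C] [HasFiniteBiproducts C]

/-- The relations `[A] + [B] - [A ⊞ B]` and `[A] - [B]` for `A ≅ B`, defining `K₀(C, 0)`. -/
def relAdd : Set (FreeAbelianGroup C) :=
  {x | (∃ A B : C,
          x = FreeAbelianGroup.of A + FreeAbelianGroup.of B - FreeAbelianGroup.of (A ⊞ B)) ∨
       (∃ A B : C, Nonempty (A ≅ B) ∧ x = FreeAbelianGroup.of A - FreeAbelianGroup.of B)}

/-- `K₀(C, 0)`: the free abelian group on the isomorphism classes of objects of `C`. -/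
abbrev K0Zero := FreeAbelianGroup C ⧸ AddSubgroup.closure (relAdd C)

/-- The class `[A]` of an object `A` in `K₀(C, 0)`. -/
def clsZero (A : C) : K0Zero C := QuotientAddGroup.mk (FreeAbelianGroup.of A)

end K0ZeroDefs

open CategoryTheory.Pretriangulated

section TriDefs

variable (C : Type u) [Category.{v} C] [Preadditive C] [HasZeroObject C] [HasShift C ℤ]
  [∀ n : ℤ, (shiftFunctor C n).Additive] [Pretriangulated C] [HasFiniteBiproducts C]

/-- `T` is a cluster tilting subcategory of the triangulated category `C`. -/
structure IsClusterTilting (T : Set C) : Prop where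
  sum_mem : ∀ {X Y : C}, X ∈ T → Y ∈ T → (X ⊞ Y) ∈ T
  summand_mem : ∀ {X Y Z : C}, Z ∈ T → Nonempty (Z ≅ X ⊞ Y) → X ∈ T
  contravariantly_finite : ∀ X : C, ∃ T₀ ∈ T, ∃ f : T₀ ⟶ X,
    ∀ T₁ ∈ T, ∀ g : T₁ ⟶ X, ∃ h : T₁ ⟶ T₀, h ≫ f = g
  covariantly_finite : ∀ X : C, ∃ T₀ ∈ T, ∃ f : X ⟶ T₀,
    ∀ T₁ ∈ T, ∀ g : X ⟶ T₁, ∃ h : T₀ ⟶ T₁, f ≫ h = g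
  char_left : ∀ X : C, X ∈ T ↔ ∀ T₀ ∈ T, ∀ φ : T₀ ⟶ X⟦(1 : ℤ)⟧, φ = 0
  char_right : ∀ X : C, X ∈ T ↔ ∀ T₀ ∈ T, ∀ φ : X ⟶ T₀⟦(1 : ℤ)⟧, φ = 0

/-- `X → Y → Z → X[1]` is an Auslander–Reiten triangle: a distinguished triangle with `X, Z`
indecomposable, first map left almost split and second map right almost split. -/
structure IsARTriangle {X Y Z : C} (f : X ⟶ Y) (g : Y ⟶ Z) (h : Z ⟶ X⟦(1 : ℤ)⟧) : Prop where
  distinguished : Triangle.mk f g h ∈ distTriang C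
  indec₁ : Indec X
  indec₃ : Indec Z
  not_section : ¬ ∃ r : Y ⟶ X, f ≫ r = 𝟙 X
  left_almost_split : ∀ {X' : C} (u : X ⟶ X'), (¬ ∃ r : X' ⟶ X, u ≫ r = 𝟙 X) →
    ∃ v : Y ⟶ X', f ≫ v = u
  not_retraction : ¬ ∃ s : Z ⟶ Y, s ≫ g = 𝟙 Z
  right_almost_split : ∀ {W : C} (u : W ⟶ Z), (¬ ∃ s : Z ⟶ W, s ≫ u = 𝟙 Z) →
    ∃ v : W ⟶ Y, v ≫ g = u

/-- The shifted subcategory `T[1]` (closed under isomorphisms). -/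
def shiftSet (T : Set C) : Set C := {W | ∃ t ∈ T, Nonempty (W ≅ t⟦(1 : ℤ)⟧)}

/-- `h` factors through an object of `T[1]`. -/
def FactorsThruShift (T : Set C) {Z X : C} (h : Z ⟶ X⟦(1 : ℤ)⟧) : Prop :=
  ∃ t ∈ T, ∃ (u : Z ⟶ t⟦(1 : ℤ)⟧) (v : t⟦(1 : ℤ)⟧ ⟶ X⟦(1 : ℤ)⟧), u ≫ v = h

/-- The set of elements `[X] + [Z] - [Y]` of `K₀(C, 0)` for all distinguished triangles. -/
def triRel : Set (K0Zero C) :=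
  {x | ∃ T : Triangle C, T ∈ (distTriang C) ∧
        x = clsZero C T.obj₁ + clsZero C T.obj₃ - clsZero C T.obj₂}

/-- The Grothendieck group `K₀(C)` of the triangulated category `C`. -/
abbrev K0Tri := K0Zero C ⧸ AddSubgroup.closure (triRel C)

/-- The canonical epimorphism `ψ : K₀(C, 0) → K₀(C)`. -/
def psiTri : K0Zero C →+ K0Tri C := QuotientAddGroup.mk' _

/-- The class `[A]` of an object `A` in `K₀(C)`. -/
def k0clsTri (A : C) : K0Tri C := psiTri C (clsZero C A)

/-- The relations `[X] + [Z] - [Y]` for triangles `X → Y → Z --h--> X[1]` with `h` factoring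
through an object of `T[1]`. -/
def relTriRel (T : Set C) : Set (K0Zero C) :=
  {x | ∃ Tr : Triangle C, Tr ∈ (distTriang C) ∧ FactorsThruShift C T Tr.mor₃ ∧
        x = clsZero C Tr.obj₁ + clsZero C Tr.obj₃ - clsZero C Tr.obj₂}

/-- The relative Grothendieck group `K₀(C, T)`. -/
abbrev K0RelTri (T : Set C) := K0Zero C ⧸ AddSubgroup.closure (relTriRel C T)

/-- The canonical projection `g : K₀(C, 0) → K₀(C, T)`. -/
def gProj (T : Set C) : K0Zero C →+ K0RelTri C T := QuotientAddGroup.mk' _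

/-- The set of elements `[δ] = [X] + [Z] - [Y]` of `K₀(C, 0)` arising from Auslander–Reiten
triangles `X → Y → Z → X[1]`; for the AR triangle starting at `X` this is `[l_X]`. -/
def arRelTri : Set (K0Zero C) :=
  {x | ∃ (X Y Z : C) (f : X ⟶ Y) (g : Y ⟶ Z) (h : Z ⟶ X⟦(1 : ℤ)⟧),
        IsARTriangle C f g h ∧ x = clsZero C X + clsZero C Z - clsZero C Y}

/-- The set of elements `[l_X]` for `X ∈ Ind(C) \ T[1]`. -/
def arRelTriOff (T : Set C) : Set (K0Zero C) :=
  {x | ∃ (X Y Z : C) (f : X ⟶ Y) (g : Y ⟶ Z) (h : Z ⟶ X⟦(1 : ℤ)⟧),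
        IsARTriangle C f g h ∧ X ∉ shiftSet C T ∧
        x = clsZero C X + clsZero C Z - clsZero C Y}

/-- `C` has Auslander–Reiten triangles: every indecomposable `X` admits an Auslander–Reiten
triangle `X → Y → τ⁻¹X → X[1]`. -/
def HasARTriangles : Prop :=
  ∀ X : C, Indec X →
    ∃ (Y Z : C) (f : X ⟶ Y) (g : Y ⟶ Z) (h : Z ⟶ X⟦(1 : ℤ)⟧), IsARTriangle C f g h

/-- `add T₀`: the objects isomorphic to direct summands of finite direct sums of copies
of `T₀`. -/
def addSet (T₀ : C) : Set C :=
  {X | ∃ (n : ℕ) (Y : C), Nonempty ((⨁ fun _ : Fin n => T₀) ≅ X ⊞ Y)}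

/-- `Ind(C)` is finite: there are finitely many indecomposables up to isomorphism. -/
def FinitelyManyIndec : Prop :=
  ∃ (n : ℕ) (ind : Fin n → C), ∀ X : C, Indec X → ∃ i, Nonempty (X ≅ ind i)

end TriDefs

/-- A (full, isomorphism-closed) triangulated subcategory of `C`, given by its set of
objects: it contains `0`, is closed under isomorphisms, under the shift in both directions,
and under cones of morphisms. -/
structure IsTriangulatedSub (C : Type u) [Category.{v} C] [Preadditive C] [HasZeroObject C]
    [HasShift C ℤ] [∀ n : ℤ, (shiftFunctor C n).Additive] [Pretriangulated C]
    (S : Set C) : Prop where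
  zero_mem : (0 : C) ∈ S
  iso_closed : ∀ {A B : C}, A ∈ S → Nonempty (A ≅ B) → B ∈ S
  shift_iff : ∀ A : C, A ∈ S ↔ A⟦(1 : ℤ)⟧ ∈ S
  cone_mem : ∀ T : Triangle C, T ∈ (distTriang C) → T.obj₁ ∈ S → T.obj₂ ∈ S → T.obj₃ ∈ S

/-! The class map `A ↦ [A]` is additive on distinguished triangles, so for a subgroup `H` of
`K₀(C)` the objects with `[A] ∈ H` form a triangulated subcategory; it is dense because
`[A ⊞ A⟦1⟧] = 0`, and it generates `H` because every element of `K₀(C)` is a class `[A]`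
(negatives are shifts). Conversely, for a dense triangulated `S` (Thomason), objects modulo
stable isomorphism `A ⊞ s ≅ B ⊞ s'` (`s, s' ∈ S`) form an abelian group, with inverse given by
the shift since `A ⊞ A⟦1⟧ ∈ S`, and `A ↦ [A]ₛ` is additive on triangles, hence factors
through `K₀(C)` and kills the classes of `S`. So `[A] ∈ ⟨[S]⟩` makes `A` stably isomorphic to
`0`, i.e. `A ⊞ s ≅ s'`, and `A` is the cone of `s → A ⊞ s`, which lies in `S`. -/

section Biproducts

variable {C : Type u} [Category.{v} C] [Preadditive C] [HasFiniteBiproducts C]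

def biprodIsoPiBool (g : Bool → C) : g true ⊞ g false ≅ ∏ᶜ g where
  hom := Pi.lift fun b => match b with | true => biprod.fst | false => biprod.snd
  inv := biprod.lift (Pi.π g true) (Pi.π g false)
  hom_inv_id := by apply biprod.hom_ext <;> simp
  inv_hom_id := by apply Pi.hom_ext; rintro (_ | _) <;> simp

def biprodMiddleFourIso (a b c d : C) : (a ⊞ b) ⊞ (c ⊞ d) ≅ (a ⊞ c) ⊞ (b ⊞ d) :=
  calc (a ⊞ b) ⊞ (c ⊞ d) ≅ a ⊞ (b ⊞ (c ⊞ d)) := biprod.associator _ _ _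
    _ ≅ a ⊞ ((b ⊞ c) ⊞ d) := biprod.mapIso (Iso.refl a) (biprod.associator _ _ _).symm
    _ ≅ a ⊞ ((c ⊞ b) ⊞ d) :=
        biprod.mapIso (Iso.refl a) (biprod.mapIso (biprod.braiding _ _) (Iso.refl d))
    _ ≅ a ⊞ (c ⊞ (b ⊞ d)) := biprod.mapIso (Iso.refl a) (biprod.associator _ _ _)
    _ ≅ (a ⊞ c) ⊞ (b ⊞ d) := (biprod.associator _ _ _).symm

end Biproducts

section Triangulated

variable {C : Type u} [Category.{v} C] [Preadditive C] [HasZeroObject C] [HasShift C ℤ]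
  [∀ n : ℤ, (shiftFunctor C n).Additive] [Pretriangulated C]

def IsTriangleAdditive {G : Type*} [AddCommGroup G] (f : C → G) : Prop :=
  ∀ T ∈ distTriang C, f T.obj₂ = f T.obj₁ + f T.obj₃

namespace IsTriangleAdditive

variable {G : Type*} [AddCommGroup G] {f : C → G}

lemma map_zero (hf : IsTriangleAdditive f) : f 0 = 0 := by
  simpa using hf _ (contractible_distinguished (0 : C))

lemma map_shift (hf : IsTriangleAdditive f) (A : C) : f (A⟦(1 : ℤ)⟧) = -f A := by
  have h := hf _ (rot_of_distTriang _ (contractible_distinguished A))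
  simp only [Triangle.rotate_obj₁, Triangle.rotate_obj₂, Triangle.rotate_obj₃,
    contractibleTriangle_obj₁, contractibleTriangle_obj₂, contractibleTriangle_obj₃,
    hf.map_zero] at h
  exact eq_neg_of_add_eq_zero_right h.symm

lemma map_iso (hf : IsTriangleAdditive f) {A B : C} (e : A ≅ B) : f A = f B := by
  have hT : Triangle.mk e.hom (0 : B ⟶ 0) 0 ∈ distTriang C :=
    (Triangle.distinguished_iff_of_isZero₃ _ (isZero_zero C)).2 (inferInstanceAs (IsIso e.hom))
  simpa [hf.map_zero] using (hf _ hT).symm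

lemma map_biprod [HasFiniteBiproducts C] (hf : IsTriangleAdditive f) (A B : C) :
    f (A ⊞ B) = f A + f B :=
  hf _ (binaryBiproductTriangle_distinguished A B)

lemma isTriangulatedSub_preimage (hf : IsTriangleAdditive f) (H : AddSubgroup G) :
    IsTriangulatedSub C {A | f A ∈ H} where
  zero_mem := by simp [hf.map_zero]
  iso_closed := fun hA ⟨e⟩ => show f _ ∈ H from hf.map_iso e ▸ hA
  shift_iff A := by simp [hf.map_shift]
  cone_mem T hT h₁ h₂ := by
    have h₃ : f T.obj₃ = f T.obj₂ - f T.obj₁ := by rw [hf T hT]; abel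
    simpa [h₃] using sub_mem h₂ h₁

lemma denseSub_preimage [HasFiniteBiproducts C] (hf : IsTriangleAdditive f)
    (H : AddSubgroup G) : DenseSub {A | f A ∈ H} :=
  fun A => ⟨A ⊞ A⟦(1 : ℤ)⟧, by simp [hf.map_biprod, hf.map_shift], A⟦(1 : ℤ)⟧, ⟨Iso.refl _⟩⟩

end IsTriangleAdditive

end Triangulated

section K0

variable (C : Type u) [Category.{v} C] [Preadditive C] [HasFiniteBiproducts C]

def K0Zero.lift {G : Type*} [AddCommGroup G] (f : C → G) (hiso : ∀ {A B : C}, (A ≅ B) → f A = f B)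
    (hadd : ∀ A B : C, f (A ⊞ B) = f A + f B) : K0Zero C →+ G :=
  QuotientAddGroup.lift _ (FreeAbelianGroup.lift f) <| (AddSubgroup.closure_le _).2 <| by
    rintro x (⟨A, B, rfl⟩ | ⟨A, B, ⟨e⟩, rfl⟩)
    · simp [hadd]
    · simp [hiso e]

lemma K0Zero.lift_clsZero {G : Type*} [AddCommGroup G] (f : C → G)
    (hiso : ∀ {A B : C}, (A ≅ B) → f A = f B) (hadd : ∀ A B : C, f (A ⊞ B) = f A + f B)
    (A : C) : K0Zero.lift C f hiso hadd (clsZero C A) = f A := by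
  simp [K0Zero.lift, clsZero]

end K0

section K0Tri

variable (C : Type u) [Category.{v} C] [Preadditive C] [HasZeroObject C] [HasShift C ℤ]
  [∀ n : ℤ, (shiftFunctor C n).Additive] [Pretriangulated C] [HasFiniteBiproducts C]

lemma isTriangleAdditive_k0clsTri : IsTriangleAdditive (k0clsTri C) := by
  intro T hT
  have h : psiTri C (clsZero C T.obj₁ + clsZero C T.obj₃ - clsZero C T.obj₂) = 0 :=
    (QuotientAddGroup.eq_zero_iff _).2 (AddSubgroup.subset_closure ⟨T, hT, rfl⟩)
  rw [map_sub, map_add] at h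
  exact (sub_eq_zero.mp h).symm

variable {C} in
def K0Tri.lift {G : Type*} [AddCommGroup G] {f : C → G} (hf : IsTriangleAdditive f) :
    K0Tri C →+ G :=
  QuotientAddGroup.lift _ (K0Zero.lift C f hf.map_iso hf.map_biprod) <|
    (AddSubgroup.closure_le _).2 <| by
      rintro _ ⟨T, hT, rfl⟩
      simp [K0Zero.lift_clsZero, hf T hT]

variable {C} in
lemma K0Tri.lift_k0clsTri {G : Type*} [AddCommGroup G] {f : C → G} (hf : IsTriangleAdditive f)
    (A : C) : K0Tri.lift hf (k0clsTri C A) = f A :=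
  K0Zero.lift_clsZero C f hf.map_iso hf.map_biprod A

lemma k0clsTri_surjective : Function.Surjective (k0clsTri C) := by
  have hk := isTriangleAdditive_k0clsTri C
  let π : FreeAbelianGroup C →+ K0Tri C := (psiTri C).comp (QuotientAddGroup.mk' _)
  have hπ : Function.Surjective π :=
    (QuotientAddGroup.mk'_surjective _).comp (QuotientAddGroup.mk'_surjective _)
  intro x
  obtain ⟨g, rfl⟩ := hπ x
  induction g using FreeAbelianGroup.induction_on with
  | zero => exact ⟨0, by rw [hk.map_zero, map_zero]⟩
  | of A => exact ⟨A, rfl⟩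
  | neg A _ => exact ⟨A⟦(1 : ℤ)⟧, by rw [hk.map_shift, map_neg]; rfl⟩
  | add _ _ hg hg' =>
    obtain ⟨A, hA⟩ := hg
    obtain ⟨B, hB⟩ := hg'
    exact ⟨A ⊞ B, by rw [hk.map_biprod, hA, hB, map_add]⟩

lemma closure_image_k0clsTri_preimage (H : AddSubgroup (K0Tri C)) :
    AddSubgroup.closure (k0clsTri C '' {A | k0clsTri C A ∈ H}) = H := by
  rw [show {A | k0clsTri C A ∈ H} = k0clsTri C ⁻¹' H from rfl,
    Set.image_preimage_eq _ (k0clsTri_surjective C), AddSubgroup.closure_eq]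

end K0Tri

section TriangulatedSub

variable {C : Type u} [Category.{v} C] [Preadditive C] [HasZeroObject C] [HasShift C ℤ]
  [∀ n : ℤ, (shiftFunctor C n).Additive] [Pretriangulated C] [HasFiniteBiproducts C]

lemma exists_distinguished_biprod {T₁ T₂ : Triangle C} (h₁ : T₁ ∈ distTriang C)
    (h₂ : T₂ ∈ distTriang C) :
    ∃ T ∈ distTriang C, Nonempty (T.obj₁ ≅ T₁.obj₁ ⊞ T₂.obj₁) ∧
      Nonempty (T.obj₂ ≅ T₁.obj₂ ⊞ T₂.obj₂) ∧ Nonempty (T.obj₃ ≅ T₁.obj₃ ⊞ T₂.obj₃) := by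
  let T : Bool → Triangle C := fun b => Bool.rec T₂ T₁ b
  exact ⟨productTriangle T, productTriangle_distinguished T (fun b => Bool.rec h₂ h₁ b),
    ⟨(biprodIsoPiBool _).symm⟩, ⟨(biprodIsoPiBool _).symm⟩, ⟨(biprodIsoPiBool _).symm⟩⟩

namespace IsTriangulatedSub

variable {S : Set C}

lemma biprod_mem (hS : IsTriangulatedSub C S) {A B : C} (hA : A ∈ S) (hB : B ∈ S) :
    (A ⊞ B) ∈ S :=
  (hS.shift_iff _).2 <| hS.cone_mem _
    (rot_of_distTriang _ (rot_of_distTriang _ (binaryBiproductTriangle_distinguished A B)))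
    hB ((hS.shift_iff A).1 hA)

lemma mem_of_biprod_mem (hS : IsTriangulatedSub C S) {A B : C} (hB : B ∈ S) (h : (B ⊞ A) ∈ S) :
    A ∈ S :=
  hS.cone_mem _ (binaryBiproductTriangle_distinguished B A) hB h

lemma cone_biprod_mem (hS : IsTriangulatedSub C S) {T W : Triangle C}
    (hT : T ∈ distTriang C) (hW : W ∈ distTriang C) (h₁ : (T.obj₁ ⊞ W.obj₁) ∈ S)
    (h₂ : (T.obj₂ ⊞ W.obj₂) ∈ S) : (T.obj₃ ⊞ W.obj₃) ∈ S := by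
  obtain ⟨U, hU, ⟨e₁⟩, ⟨e₂⟩, ⟨e₃⟩⟩ := exists_distinguished_biprod hT hW
  exact hS.iso_closed (hS.cone_mem U hU (hS.iso_closed h₁ ⟨e₁.symm⟩)
    (hS.iso_closed h₂ ⟨e₂.symm⟩)) ⟨e₃⟩

lemma biprod_shift_mem (hS : IsTriangulatedSub C S) (hD : DenseSub S) (A : C) :
    (A ⊞ A⟦(1 : ℤ)⟧) ∈ S := by
  -- add `c → c ⊞ A → A` to `A → 0 → A⟦1⟧`, where `A ⊞ c ∈ S`
  obtain ⟨M, hM, c, ⟨e⟩⟩ := hD A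
  have h := hS.cone_biprod_mem (contractible_distinguished₂ A)
    (binaryBiproductTriangle_distinguished c A) (hS.iso_closed hM ⟨e⟩)
    (hS.iso_closed hM ⟨e ≪≫ biprod.braiding A c ≪≫ isoZeroBiprod (isZero_zero C)⟩)
  exact hS.iso_closed h ⟨biprod.braiding _ _⟩

end IsTriangulatedSub

end TriangulatedSub

section Stable

variable {C : Type u} [Category.{v} C] [Preadditive C] [HasFiniteBiproducts C] {S : Set C}

def StablyIso (S : Set C) (A B : C) : Prop :=
  ∃ s ∈ S, ∃ s' ∈ S, Nonempty (A ⊞ s ≅ B ⊞ s')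

lemma StablyIso.symm {A B : C} (h : StablyIso S A B) : StablyIso S B A := by
  obtain ⟨s, hs, s', hs', ⟨e⟩⟩ := h
  exact ⟨s', hs', s, hs, ⟨e.symm⟩⟩

lemma StablyIso.of_biprod_mem {A B c : C} (hA : (A ⊞ c) ∈ S) (hB : (B ⊞ c) ∈ S) :
    StablyIso S A B :=
  ⟨B ⊞ c, hB, A ⊞ c, hA, ⟨(biprod.associator _ _ _).symm ≪≫
    biprod.mapIso (biprod.braiding A B) (Iso.refl c) ≪≫ biprod.associator _ _ _⟩⟩

variable [HasZeroObject C] [HasShift C ℤ] [∀ n : ℤ, (shiftFunctor C n).Additive]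
  [Pretriangulated C]

namespace StablyIso

lemma of_iso (hS : IsTriangulatedSub C S) {A B : C} (e : A ≅ B) : StablyIso S A B :=
  ⟨0, hS.zero_mem, 0, hS.zero_mem, ⟨biprod.mapIso e (Iso.refl _)⟩⟩

lemma zero_of_mem (hS : IsTriangulatedSub C S) {A : C} (hA : A ∈ S) : StablyIso S A 0 :=
  ⟨0, hS.zero_mem, A, hA, ⟨biprod.braiding A 0⟩⟩

lemma trans (hS : IsTriangulatedSub C S) {A B D : C} (h : StablyIso S A B)
    (h' : StablyIso S B D) : StablyIso S A D := by
  obtain ⟨s, hs, s', hs', ⟨e⟩⟩ := h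
  obtain ⟨t, ht, t', ht', ⟨e'⟩⟩ := h'
  refine ⟨s ⊞ t, hS.biprod_mem hs ht, t' ⊞ s', hS.biprod_mem ht' hs', ⟨?_⟩⟩
  calc A ⊞ (s ⊞ t) ≅ (A ⊞ s) ⊞ t := (biprod.associator _ _ _).symm
    _ ≅ (B ⊞ s') ⊞ t := biprod.mapIso e (Iso.refl t)
    _ ≅ (B ⊞ t) ⊞ s' := biprod.associator _ _ _ ≪≫
        biprod.mapIso (Iso.refl B) (biprod.braiding s' t) ≪≫ (biprod.associator _ _ _).symm
    _ ≅ (D ⊞ t') ⊞ s' := biprod.mapIso e' (Iso.refl s')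
    _ ≅ D ⊞ (t' ⊞ s') := biprod.associator _ _ _

lemma biprod (hS : IsTriangulatedSub C S) {A B A' B' : C} (h : StablyIso S A B)
    (h' : StablyIso S A' B') : StablyIso S (A ⊞ A') (B ⊞ B') := by
  obtain ⟨s, hs, s', hs', ⟨e⟩⟩ := h
  obtain ⟨t, ht, t', ht', ⟨e'⟩⟩ := h'
  exact ⟨s ⊞ t, hS.biprod_mem hs ht, s' ⊞ t', hS.biprod_mem hs' ht',
    ⟨biprodMiddleFourIso _ _ _ _ ≪≫ biprod.mapIso e e' ≪≫ biprodMiddleFourIso _ _ _ _⟩⟩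

lemma shift (hS : IsTriangulatedSub C S) {A B : C} (h : StablyIso S A B) :
    StablyIso S (A⟦(1 : ℤ)⟧) (B⟦(1 : ℤ)⟧) := by
  obtain ⟨s, hs, s', hs', ⟨e⟩⟩ := h
  have := preservesBinaryBiproducts_of_preservesBiproducts (shiftFunctor C (1 : ℤ))
  exact ⟨s⟦(1 : ℤ)⟧, (hS.shift_iff s).1 hs, s'⟦(1 : ℤ)⟧, (hS.shift_iff s').1 hs',
    ⟨((shiftFunctor C (1 : ℤ)).mapBiprod A s).symm ≪≫ (shiftFunctor C (1 : ℤ)).mapIso e ≪≫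
      (shiftFunctor C (1 : ℤ)).mapBiprod B s'⟩⟩

end StablyIso

lemma stablyIso_of_distinguished (hS : IsTriangulatedSub C S) (hD : DenseSub S)
    {T : Triangle C} (hT : T ∈ distTriang C) : StablyIso S (T.obj₁ ⊞ T.obj₃) T.obj₂ := by
  -- for `T = X → Y → Z`, add `Z → Z ⊞ c → c` to `Z⟦-1⟧ → X → Y`, where `(X ⊞ Z) ⊞ c ∈ S`
  obtain ⟨M, hM, c, ⟨e⟩⟩ := hD (T.obj₁ ⊞ T.obj₃)
  have h₁ : (T.obj₃⟦(-1 : ℤ)⟧ ⊞ T.obj₃) ∈ S :=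
    hS.iso_closed (hS.biprod_shift_mem hD _)
      ⟨biprod.mapIso (Iso.refl _) ((shiftFunctorCompIsoId C (-1 : ℤ) 1 (by norm_num)).app _)⟩
  have h₂ : (T.obj₁ ⊞ (T.obj₃ ⊞ c)) ∈ S := hS.iso_closed hM ⟨e ≪≫ biprod.associator _ _ _⟩
  exact .of_biprod_mem (hS.iso_closed hM ⟨e⟩) <| hS.cone_biprod_mem (inv_rot_of_distTriang _ hT)
    (binaryBiproductTriangle_distinguished T.obj₃ c) h₁ h₂

def stablyIsoSetoid (hS : IsTriangulatedSub C S) : Setoid C where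
  r := StablyIso S
  iseqv := ⟨fun A => .of_iso hS (Iso.refl A), StablyIso.symm, .trans hS⟩

instance (hS : IsTriangulatedSub C S) : Zero (Quotient (stablyIsoSetoid hS)) := ⟨⟦0⟧⟩

instance (hS : IsTriangulatedSub C S) : Add (Quotient (stablyIsoSetoid hS)) :=
  ⟨Quotient.map₂ (· ⊞ ·) fun _ _ h _ _ h' => StablyIso.biprod hS h h'⟩

instance (hS : IsTriangulatedSub C S) : Neg (Quotient (stablyIsoSetoid hS)) :=
  ⟨Quotient.map (·⟦(1 : ℤ)⟧) fun _ _ h => StablyIso.shift hS h⟩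

abbrev stablyIsoAddCommGroup (hS : IsTriangulatedSub C S) (hD : DenseSub S) :
    AddCommGroup (Quotient (stablyIsoSetoid hS)) where
  add_assoc := by
    rintro ⟨A⟩ ⟨B⟩ ⟨D⟩
    exact Quotient.sound (.of_iso hS (biprod.associator A B D))
  zero_add := by
    rintro ⟨A⟩
    exact Quotient.sound (.of_iso hS (isoZeroBiprod (isZero_zero C)).symm)
  add_zero := by
    rintro ⟨A⟩
    exact Quotient.sound (.of_iso hS (isoBiprodZero (isZero_zero C)).symm)
  add_comm := by
    rintro ⟨A⟩ ⟨B⟩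
    exact Quotient.sound (.of_iso hS (biprod.braiding A B))
  neg_add_cancel := by
    rintro ⟨A⟩
    exact Quotient.sound
      (.zero_of_mem hS (hS.iso_closed (hS.biprod_shift_mem hD A) ⟨biprod.braiding _ _⟩))
  nsmul := nsmulRec
  zsmul := zsmulRec

lemma mem_of_k0clsTri_mem_closure (hS : IsTriangulatedSub C S) (hD : DenseSub S) {A : C}
    (h : k0clsTri C A ∈ AddSubgroup.closure (k0clsTri C '' S)) : A ∈ S := by
  let _ := stablyIsoAddCommGroup hS hD
  let φ := K0Tri.lift (f := Quotient.mk (stablyIsoSetoid hS))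
    fun T hT => Quotient.sound (stablyIso_of_distinguished hS hD hT).symm
  have hker : AddSubgroup.closure (k0clsTri C '' S) ≤ φ.ker := by
    refine (AddSubgroup.closure_le _).2 ?_
    rintro _ ⟨B, hB, rfl⟩
    exact (K0Tri.lift_k0clsTri _ B).trans (Quotient.sound (.zero_of_mem hS hB))
  obtain ⟨s, hs, s', hs', ⟨e⟩⟩ : StablyIso S A 0 :=
    Quotient.exact ((K0Tri.lift_k0clsTri _ A).symm.trans (hker h))
  exact hS.mem_of_biprod_mem hs <| hS.iso_closed (hS.biprod_mem hS.zero_mem hs')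
    ⟨e.symm ≪≫ biprod.braiding A s⟩

end Stable

theorem stmt15 (C : Type u) [Category.{v} C] [Preadditive C] [HasZeroObject C]
    [HasShift C ℤ] [∀ n : ℤ, (shiftFunctor C n).Additive] [Pretriangulated C]
    [HasFiniteBiproducts C] [EssentiallySmall.{w} C] :
    (∀ S : Set C, IsTriangulatedSub C S → DenseSub S →
        {A : C | k0clsTri C A ∈ AddSubgroup.closure (k0clsTri C '' S)} = S) ∧
    (∀ H : AddSubgroup (K0Tri C),
        IsTriangulatedSub C {A : C | k0clsTri C A ∈ H} ∧
        DenseSub {A : C | k0clsTri C A ∈ H} ∧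
        AddSubgroup.closure (k0clsTri C '' {A : C | k0clsTri C A ∈ H}) = H) :=
  ⟨fun _ hS hD => Set.ext fun A =>
      ⟨mem_of_k0clsTri_mem_closure hS hD, fun hA => AddSubgroup.subset_closure ⟨A, hA, rfl⟩⟩,
    fun H => ⟨(isTriangleAdditive_k0clsTri C).isTriangulatedSub_preimage H,
      (isTriangleAdditive_k0clsTri C).denseSub_preimage H, closure_image_k0clsTri_preimage C H⟩⟩
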